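/- If a randomized mechanism A satisfies (ε,δ)-differential privacy for a population parameter g(Y_N), then applying A to the estimator computed on a simple random sample without replacement of size n from the population of size N satisfies (ε_n, δ_n)-differential privacy with ε_n = log(1 + (n/N)(e^ε − 1)) and δ_n = (n/N)δ. -/

import Mathlib

set_option maxHeartbeats 1000000


/-- Privacy amplification by subsampling (simple random sampling without
replacement, bounded DP).  `P M ω = Pr[A(g(M)) ≤ ω]` for a dataset `M` of
size `n`, assumed to satisfy `(ε,δ)`-DP for datasets differing in one element. -/
theorem amplification_by_subsampling
    (N n : ℕ) (hn : 0 < n) (hnN : n ≤ N)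
    (ε δ : ℝ) (hε : 0 < ε) (hδ : 0 ≤ δ)
    (P : Multiset ℝ → ℝ → ℝ)
    (hPnonneg : ∀ M ω, 0 ≤ P M ω)
    (hDP : ∀ (M₀ : Multiset ℝ) (a b : ℝ), M₀.card = n - 1 → ∀ ω : ℝ,
        P (a ::ₘ M₀) ω ≤ Real.exp ε * P (b ::ₘ M₀) ω + δ)
    (Y Y' : Fin N → ℝ) (k : Fin N)
    (hdiff : ∀ i, i ≠ k → Y i = Y' i) (ω : ℝ) :
    (1 / (N.choose n : ℝ)) *
        ∑ s ∈ Finset.powersetCard n (Finset.univ : Finset (Fin N)), P (s.val.map Y) ω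
      ≤ (1 + ((n : ℝ) / N) * (Real.exp ε - 1)) *
          ((1 / (N.choose n : ℝ)) *
            ∑ s ∈ Finset.powersetCard n (Finset.univ : Finset (Fin N)), P (s.val.map Y') ω)
        + ((n : ℝ) / N) * δ := by
  classical
  have hNpos : 0 < N := lt_of_lt_of_le hn hnN
  set e : ℝ := Real.exp ε with he
  have he1 : (1:ℝ) ≤ e := Real.one_le_exp hε.le
  set S := Finset.powersetCard n (Finset.univ : Finset (Fin N)) with hS
  set Fi := S.filter (fun s => k ∈ s) with hFi
  set Fo := S.filter (fun s => k ∉ s) with hFo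
  -- basic membership facts
  have hmemS : ∀ s : Finset (Fin N), s ∈ S ↔ s.card = n := by
    intro s; simp [hS, Finset.mem_powersetCard_univ]
  -- multiset equality off k
  have hmapFo : ∀ s ∈ Fo, s.val.map Y = s.val.map Y' := by
    intro s hs
    rw [hFo, Finset.mem_filter] at hs
    exact Multiset.map_congr rfl (fun i hi => hdiff i (fun hik => hs.2 (hik ▸ hi)))
  -- cons decomposition for s containing k
  have hcons : ∀ s ∈ Fi, ∀ Z : Fin N → ℝ,
      s.val.map Z = Z k ::ₘ ((s.erase k).val.map Z) := by
    intro s hs Z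
    rw [hFi, Finset.mem_filter] at hs
    have hk : k ∈ s.val := hs.2
    rw [Finset.erase_val]
    conv_lhs => rw [← Multiset.cons_erase hk]
    rw [Multiset.map_cons]
  have heraseEq : ∀ s ∈ Fi, (s.erase k).val.map Y = (s.erase k).val.map Y' := by
    intro s hs
    exact Multiset.map_congr rfl (fun i hi => hdiff i (Finset.ne_of_mem_erase hi))
  have hcard₀ : ∀ s ∈ Fi, ((s.erase k).val.map Y').card = n - 1 := by
    intro s hs
    rw [hFi, Finset.mem_filter] at hs
    rw [Multiset.card_map, ← Finset.card_def, Finset.card_erase_of_mem hs.2,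
      (hmemS s).1 hs.1]
  set A : ℝ := ∑ s ∈ Fo, P (s.val.map Y') ω with hA
  set B : ℝ := ∑ s ∈ Fi, P (s.val.map Y') ω with hB
  set B' : ℝ := ∑ s ∈ Fi, P (s.val.map Y) ω with hB'
  have hAnn : 0 ≤ A := Finset.sum_nonneg fun s _ => hPnonneg _ _
  have hBnn : 0 ≤ B := Finset.sum_nonneg fun s _ => hPnonneg _ _
  have hB'nn : 0 ≤ B' := Finset.sum_nonneg fun s _ => hPnonneg _ _
  have hsplitY : ∑ s ∈ S, P (s.val.map Y) ω = B' + A := by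
    rw [← Finset.sum_filter_add_sum_filter_not S (fun s => k ∈ s)]
    congr 1
    exact Finset.sum_congr rfl (fun s hs => by rw [hmapFo s hs])
  have hsplitY' : ∑ s ∈ S, P (s.val.map Y') ω = B + A := by
    rw [← Finset.sum_filter_add_sum_filter_not S (fun s => k ∈ s)]
  -- cardinality of Fi
  have hcardFi : Fi.card = (N-1).choose (n-1) := by
    have hcE : (Finset.univ.erase k).card = N - 1 := by
      rw [Finset.card_erase_of_mem (Finset.mem_univ k), Finset.card_univ, Fintype.card_fin]
    rw [← hcE, ← Finset.card_powersetCard]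
    apply Finset.card_nbij' (fun s => s.erase k) (fun t => insert k t)
    · intro s hs
      simp only [Finset.mem_coe, hFi, Finset.mem_filter] at hs
      rw [Finset.mem_coe, Finset.mem_powersetCard]
      exact ⟨Finset.erase_subset_erase k (Finset.subset_univ s),
        by rw [Finset.card_erase_of_mem hs.2, (hmemS s).1 hs.1]⟩
    · intro t ht
      rw [Finset.mem_coe, Finset.mem_powersetCard] at ht
      have hkt : k ∉ t := fun h => Finset.notMem_erase k Finset.univ (ht.1 h)
      rw [Finset.mem_coe, hFi, Finset.mem_filter]
      refine ⟨(hmemS _).2 ?_, Finset.mem_insert_self k t⟩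
      rw [Finset.card_insert_of_notMem hkt, ht.2]
      exact Nat.succ_pred_eq_of_pos hn
    · intro s hs
      simp only [Finset.mem_coe, hFi, Finset.mem_filter] at hs
      exact Finset.insert_erase hs.2
    · intro t ht
      rw [Finset.mem_coe, Finset.mem_powersetCard] at ht
      exact Finset.erase_insert (fun h => Finset.notMem_erase k Finset.univ (ht.1 h))
  -- Fact 1 : B' ≤ e * B + K * δ
  have hF1 : B' ≤ e * B + ((N-1).choose (n-1) : ℝ) * δ := by
    calc B' ≤ ∑ s ∈ Fi, (e * P (s.val.map Y') ω + δ) := by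
          apply Finset.sum_le_sum
          intro s hs
          rw [hcons s hs Y, hcons s hs Y', heraseEq s hs]
          exact hDP _ (Y k) (Y' k) (hcard₀ s hs) ω
      _ = e * B + ((N-1).choose (n-1) : ℝ) * δ := by
          rw [Finset.sum_add_distrib, ← Finset.mul_sum, Finset.sum_const, hcardFi,
            nsmul_eq_mul]
  -- Fact 2 : (N-n) * B' ≤ e * n * A + (N-n) * K * δ
  have hF2 : ((N:ℝ) - n) * B' ≤ e * n * A + ((N:ℝ) - n) * ((N-1).choose (n-1) : ℝ) * δ := by
    have hNn : ((N - n : ℕ) : ℝ) = (N:ℝ) - n := by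
      push_cast [Nat.cast_sub hnN]; ring
    have hcardc : ∀ s ∈ Fi, (sᶜ : Finset (Fin N)).card = N - n := by
      intro s hs
      rw [hFi, Finset.mem_filter] at hs
      rw [Finset.card_compl, Fintype.card_fin, (hmemS s).1 hs.1]
    have step1 : ((N:ℝ) - n) * B' = ∑ s ∈ Fi, ∑ _j ∈ sᶜ, P (s.val.map Y) ω := by
      rw [hB', Finset.mul_sum]
      refine Finset.sum_congr rfl fun s hs => ?_
      rw [Finset.sum_const, hcardc s hs, nsmul_eq_mul, hNn]
    have step2 : ∀ s ∈ Fi, ∀ j ∈ sᶜ, P (s.val.map Y) ω ≤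
        e * P ((insert j (s.erase k)).val.map Y') ω + δ := by
      intro s hs j hj
      rw [Finset.mem_compl] at hj
      have hjk : j ∉ s.erase k := fun h => hj (Finset.mem_of_mem_erase h)
      rw [hcons s hs Y, heraseEq s hs, Finset.insert_val_of_notMem hjk,
        Multiset.map_cons]
      exact hDP _ (Y k) (Y' j) (hcard₀ s hs) ω
    have step3 : ∑ s ∈ Fi, ∑ j ∈ sᶜ, P ((insert j (s.erase k)).val.map Y') ω
        = ∑ t ∈ Fo, ∑ _i ∈ t, P (t.val.map Y') ω := by
      rw [Finset.sum_sigma', Finset.sum_sigma']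
      refine Finset.sum_nbij' (fun x => ⟨insert x.2 (x.1.erase k), x.2⟩)
        (fun y => ⟨insert k (y.1.erase y.2), y.2⟩) ?_ ?_ ?_ ?_ ?_
      · rintro ⟨s, j⟩ hx
        rw [Finset.mem_sigma] at hx
        obtain ⟨hs, hj⟩ := hx
        rw [hFi, Finset.mem_filter] at hs
        rw [Finset.mem_compl] at hj
        have hjk : j ∉ s.erase k := fun h => hj (Finset.mem_of_mem_erase h)
        rw [Finset.mem_sigma, hFo, Finset.mem_filter]
        have hks : k ≠ j := fun h => hj (h ▸ hs.2)
        refine ⟨⟨(hmemS _).2 ?_, ?_⟩, Finset.mem_insert_self j _⟩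
        · rw [Finset.card_insert_of_notMem hjk, Finset.card_erase_of_mem hs.2,
            (hmemS s).1 hs.1]
          exact Nat.succ_pred_eq_of_pos hn
        · intro hk
          rcases Finset.mem_insert.1 hk with h | h
          · exact hks h
          · exact Finset.notMem_erase k s h
      · rintro ⟨t, i⟩ hy
        rw [Finset.mem_sigma] at hy
        obtain ⟨ht, hi⟩ := hy
        rw [hFo, Finset.mem_filter] at ht
        have hik : i ≠ k := fun h => ht.2 (h ▸ hi)
        have hkt : k ∉ t.erase i := fun h => ht.2 (Finset.mem_of_mem_erase h)
        rw [Finset.mem_sigma, hFi, Finset.mem_filter, Finset.mem_compl]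
        refine ⟨⟨(hmemS _).2 ?_, Finset.mem_insert_self k _⟩, ?_⟩
        · rw [Finset.card_insert_of_notMem hkt, Finset.card_erase_of_mem hi,
            (hmemS t).1 ht.1]
          exact Nat.succ_pred_eq_of_pos hn
        · intro hi'
          rcases Finset.mem_insert.1 hi' with h | h
          · exact hik h
          · exact Finset.notMem_erase i t h
      · rintro ⟨s, j⟩ hx
        rw [Finset.mem_sigma] at hx
        obtain ⟨hs, hj⟩ := hx
        rw [hFi, Finset.mem_filter] at hs
        rw [Finset.mem_compl] at hj
        have hjk : j ∉ s.erase k := fun h => hj (Finset.mem_of_mem_erase h)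
        simp only [Finset.erase_insert hjk, Finset.insert_erase hs.2]
      · rintro ⟨t, i⟩ hy
        rw [Finset.mem_sigma] at hy
        obtain ⟨ht, hi⟩ := hy
        rw [hFo, Finset.mem_filter] at ht
        have hkt : k ∉ t.erase i := fun h => ht.2 (Finset.mem_of_mem_erase h)
        simp only [Finset.erase_insert hkt, Finset.insert_erase hi]
      · rintro ⟨s, j⟩ _
        rfl
    have step5 : ∑ t ∈ Fo, ∑ _i ∈ t, P (t.val.map Y') ω = (n:ℝ) * A := by
      rw [hA, Finset.mul_sum]
      refine Finset.sum_congr rfl fun t ht => ?_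
      rw [hFo, Finset.mem_filter] at ht
      rw [Finset.sum_const, nsmul_eq_mul, (hmemS t).1 ht.1]
    calc ((N:ℝ) - n) * B' = ∑ s ∈ Fi, ∑ _j ∈ sᶜ, P (s.val.map Y) ω := step1
      _ ≤ ∑ s ∈ Fi, ∑ j ∈ sᶜ, (e * P ((insert j (s.erase k)).val.map Y') ω + δ) :=
          Finset.sum_le_sum fun s hs => Finset.sum_le_sum fun j hj => step2 s hs j hj
      _ = e * (∑ s ∈ Fi, ∑ j ∈ sᶜ, P ((insert j (s.erase k)).val.map Y') ω)
            + ((N:ℝ) - n) * ((N-1).choose (n-1):ℝ) * δ := by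
          simp only [Finset.sum_add_distrib, Finset.sum_const, nsmul_eq_mul]
          rw [Finset.mul_sum]
          congr 1
          · exact Finset.sum_congr rfl fun s hs => by rw [Finset.mul_sum]
          · rw [Finset.sum_congr rfl (fun s hs => by rw [hcardc s hs])]
            rw [Finset.sum_const, hcardFi, nsmul_eq_mul, hNn]
            ring
      _ = e * n * A + ((N:ℝ) - n) * ((N-1).choose (n-1):ℝ) * δ := by
          rw [step3, step5]; ring
  -- numeric identity
  have hid : (n:ℝ) * (N.choose n) = N * ((N-1).choose (n-1)) := by
    have h := Nat.add_one_mul_choose_eq (N-1) (n-1)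
    have h1 : N - 1 + 1 = N := Nat.succ_pred_eq_of_pos hNpos
    have h2 : n - 1 + 1 = n := Nat.succ_pred_eq_of_pos hn
    rw [h1, h2] at h
    have := congrArg (Nat.cast : ℕ → ℝ) h
    push_cast at this
    linarith
  -- final algebra
  have hCn : (0:ℝ) < (N.choose n : ℝ) := by
    exact_mod_cast Nat.choose_pos hnN
  have hNr : (0:ℝ) < (N:ℝ) := by exact_mod_cast hNpos
  set K : ℝ := ((N-1).choose (n-1) : ℝ) with hK
  have hKnn : 0 ≤ K := by positivity
  have key : (N:ℝ) * (B' + A) ≤ ((N:ℝ) + n * (e - 1)) * (B + A) + N * K * δ := by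
    have t1 : (N:ℝ)*B' ≤ (N:ℝ)*(e*B + K*δ) := mul_le_mul_of_nonneg_left hF1 hNr.le
    rcases le_total ((n:ℝ) * A) (((N:ℝ) - n) * B) with hcase | hcase
    · -- hard case: use F2
      have hnN' : (n:ℝ) ≤ N := by exact_mod_cast hnN
      rcases eq_or_lt_of_le hnN' with heq | hlt
      · have hA0 : A = 0 := le_antisymm (by nlinarith) hAnn
        rw [hA0, ← heq]
        nlinarith [t1]
      · have t3 : (N:ℝ)*(((N:ℝ) - n)*B') ≤ (N:ℝ)*(e*n*A + ((N:ℝ)-n)*K*δ) :=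
          mul_le_mul_of_nonneg_left hF2 hNr.le
        have t4 : (0:ℝ) ≤ (n:ℝ)*(e-1) * (((N:ℝ)-n)*B - n*A) := by
          apply mul_nonneg (mul_nonneg (by positivity) (by linarith))
          linarith
        have t5 : (0:ℝ) ≤ (N:ℝ) * (((N:ℝ)-n)*B - n*A) :=
          mul_nonneg hNr.le (by linarith)
        have h6 : ((N:ℝ)-n) * 0 ≤ ((N:ℝ)-n) *
            (((N:ℝ) + n * (e - 1)) * (B + A) + N * K * δ - N * (B' + A)) := by
          nlinarith [t3, t4, t5]
        have h7 := le_of_mul_le_mul_left h6 (by linarith : (0:ℝ) < (N:ℝ)-n)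
        linarith
    · -- easy case: use F1
      have t2 : (0:ℝ) ≤ (e-1)*((n:ℝ)*A - ((N:ℝ)-(n:ℝ))*B) := by
        apply mul_nonneg (by linarith); linarith
      nlinarith [t1, t2]
  rw [hsplitY, hsplitY']
  have hpos : (0:ℝ) < (N:ℝ) * (N.choose n) := by positivity
  have h := (div_le_div_iff_of_pos_right hpos).mpr key
  calc 1 / (N.choose n:ℝ) * (B' + A) = (N:ℝ) * (B'+A) / ((N:ℝ) * N.choose n) := by
        field_simp
    _ ≤ (((N:ℝ) + n*(e-1))*(B+A) + (N:ℝ)*K*δ) / ((N:ℝ) * N.choose n) := h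
    _ = (1 + (n:ℝ)/N*(e-1)) * (1/(N.choose n:ℝ) * (B+A)) + (n:ℝ)/N*δ := by
        rw [hK]
        field_simp
        have hid' : (n:ℝ) * (N.choose n) * δ = N * ((N-1).choose (n-1) : ℝ) * δ := by rw [hid]
        linarith [hid', mul_le_mul_of_nonneg_left hid.le (by positivity : (0:ℝ) ≤ (N:ℝ)*δ), mul_le_mul_of_nonneg_left hid.ge (by positivity : (0:ℝ) ≤ (N:ℝ)*δ), mul_le_mul_of_nonneg_left hid.le (by positivity : (0:ℝ) ≤ (N:ℝ)^2*δ*(N.choose n)), mul_le_mul_of_nonneg_left hid.ge (by positivity : (0:ℝ) ≤ (N:ℝ)^2*δ*(N.choose n))]
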